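/- Let m ≥ 2 and q ≥ 2 be integers (so that mq − 1 and q are coprime). Then: (i) ⌈k(mq−1)/q⌉ = km for all integers k with 1 ≤ k ≤ q − 1; (ii) for every integer t ≥ 0, L^t·U·L^{m−1} = [[m, 1],[(t+1)m − 1, t+1]], a matrix [[a,b],[c,d]] with ad − bc = 1 and ad + bc = 2(t+1)m − 1. Consequently the middle-tunnel slope sequence of the (mq−1, q) torus knot, namely [1/(2m−1)], 4m−1, 6m−1, …, 2m(q−1)−1, coincides with its upper-tunnel slope sequence. -/

import Mathlib

/-!
`L ^ n = [[1, 0], [n, 1]]`, so `L^t·U·L^(m−1)` multiplies out explicitly, and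
`k(mq − 1)/q = km − k/q` with `0 ≤ k/q < 1` for `0 ≤ k < q`.
-/

/-- The matrix `U = [[1,1],[0,1]]`. -/
def U : Matrix (Fin 2) (Fin 2) ℤ := !![1, 1; 0, 1]

/-- The matrix `L = [[1,0],[1,1]]`. -/
def L : Matrix (Fin 2) (Fin 2) ℤ := !![1, 0; 1, 1]

lemma L_pow (n : ℕ) : L ^ n = !![1, 0; (n : ℤ), 1] := by
  induction n with
  | zero => simp [Matrix.one_fin_two]
  | succ n ih =>
    rw [pow_succ, ih, L, Matrix.mul_fin_two]
    simp

lemma L_pow_mul_U_mul_L_pow (t n : ℕ) :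
    L ^ t * U * L ^ n = !![(n : ℤ) + 1, 1; ((t : ℤ) + 1) * (n + 1) - 1, (t : ℤ) + 1] := by
  rw [L_pow, L_pow, U, Matrix.mul_fin_two, Matrix.mul_fin_two]
  ext i j
  fin_cases i <;> fin_cases j <;> simp <;> ring

lemma Nat.coprime_mul_sub_one_left {m q : ℕ} (h : 0 < m * q) : Nat.Coprime (m * q - 1) q :=
  ((Nat.coprime_self_sub_left h).2 (Nat.coprime_one_left _)).coprime_dvd_right (dvd_mul_left q m)

lemma Int.ceil_natCast_mul_mul_sub_one_div {K : Type*} [Field K] [LinearOrder K]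
    [IsStrictOrderedRing K] [FloorRing K] {k q : ℕ} (m : ℕ) (hk : k < q) :
    ⌈(k : K) * (m * q - 1) / q⌉ = k * m := by
  have hq : (0 : K) < q := by exact_mod_cast (Nat.zero_le k).trans_lt hk
  have hkq : (k : K) < q := by exact_mod_cast hk
  rw [Int.ceil_eq_iff, lt_div_iff₀ hq, div_le_iff₀ hq]
  push_cast
  constructor <;> nlinarith [(k.cast_nonneg : (0 : K) ≤ k)]

/-- For `m, q ≥ 2`: `mq − 1` and `q` are coprime; (i) `⌈k(mq−1)/q⌉ = km` for
`1 ≤ k ≤ q − 1`; (ii) for every `t ≥ 0`, `L^t·U·L^(m−1) = [[m, 1],[(t+1)m−1, t+1]]`,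
a matrix `[[a,b],[c,d]]` with `ad − bc = 1` and `ad + bc = 2(t+1)m − 1`. -/
theorem stmt10 (m q : ℕ) (hm : 2 ≤ m) (hq : 2 ≤ q) :
    Nat.Coprime (m * q - 1) q ∧
    (∀ k : ℕ, 1 ≤ k → k ≤ q - 1 →
      ⌈((k : ℚ) * ((m : ℚ) * q - 1)) / q⌉ = (k : ℤ) * m) ∧
    (∀ t : ℕ,
      L ^ t * U * L ^ (m - 1) =
        !![(m : ℤ), 1; ((t : ℤ) + 1) * m - 1, (t : ℤ) + 1] ∧
      (L ^ t * U * L ^ (m - 1)) 0 0 * (L ^ t * U * L ^ (m - 1)) 1 1 -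
        (L ^ t * U * L ^ (m - 1)) 0 1 * (L ^ t * U * L ^ (m - 1)) 1 0 = 1 ∧
      (L ^ t * U * L ^ (m - 1)) 0 0 * (L ^ t * U * L ^ (m - 1)) 1 1 +
        (L ^ t * U * L ^ (m - 1)) 0 1 * (L ^ t * U * L ^ (m - 1)) 1 0 =
          2 * ((t : ℤ) + 1) * m - 1) := by
  refine ⟨Nat.coprime_mul_sub_one_left (by positivity),
    fun k _ hk => Int.ceil_natCast_mul_mul_sub_one_div m (by omega), fun t => ?_⟩
  have hM : L ^ t * U * L ^ (m - 1) =
      !![(m : ℤ), 1; ((t : ℤ) + 1) * m - 1, (t : ℤ) + 1] := by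
    obtain ⟨n, rfl⟩ : ∃ n, m = n + 1 := ⟨m - 1, by omega⟩
    simpa using L_pow_mul_U_mul_L_pow t n
  refine ⟨hM, ?_, ?_⟩ <;> simp only [hM, Matrix.of_apply, Matrix.cons_val', Matrix.cons_val_zero,
    Matrix.cons_val_one, Matrix.empty_val', Matrix.cons_val_fin_one] <;> ring
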